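/- arXiv:2506.10101 — 2 statements merged into one kernel-verified Lean document; each statement's English description precedes it below -/
import Mathlib

section
/- For every integer k ≥ 2 and every ω = (ω₁,…,ω_k) ∈ ℝ^k with ω_k ≠ 0, the Fourier transform of the uniform density on the standard simplex satisfies the recursion F_{Δ_k}(ω₁,…,ω_k) = (k/(i·ω_k))·[ F_{Δ_{k−1}}(ω₁,…,ω_{k−1}) − e^{−i ω_k}·F_{Δ_{k−1}}(ω₁ − ω_k, …, ω_{k−1} − ω_k) ]. -/
open MeasureTheory Real

noncomputable section

/-- Fourier transform of a real function on `ℝ^k`: `F{f}(ω) = ∫ f(x) e^{-i ω·x} dx`. -/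
def fourierOf (k : ℕ) (f : (Fin k → ℝ) → ℝ) (ω : Fin k → ℝ) : ℂ :=
  ∫ x : Fin k → ℝ, (f x : ℂ) * Complex.exp (-(Complex.I * ((∑ i, ω i * x i : ℝ) : ℂ)))

/-- The standard simplex `conv{0, e₁, …, e_k}` in `ℝ^k`. -/
def stdSimplexSet (k : ℕ) : Set (Fin k → ℝ) :=
  convexHull ℝ (insert 0 (Set.range fun i j => if j = i then (1 : ℝ) else 0))

/-- Uniform density `k!·1{x ∈ Δ_k}` on the standard simplex. -/
def stdSimplexDensity (k : ℕ) : (Fin k → ℝ) → ℝ :=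
  (stdSimplexSet k).indicator fun _ => (k.factorial : ℝ)

/-- Fourier transform of the uniform density on the standard simplex. -/
def fourierStd (k : ℕ) (ω : Fin k → ℝ) : ℂ := fourierOf k (stdSimplexDensity k) ω

namespace SimplexAux

def T (k : ℕ) : Set (Fin k → ℝ) := {x | (∀ i, 0 ≤ x i) ∧ ∑ i, x i ≤ 1}

lemma convex_T (k : ℕ) : Convex ℝ (T k) := by
  have h1 : Convex ℝ {x : Fin k → ℝ | ∀ i, 0 ≤ x i} := by
    have : {x : Fin k → ℝ | ∀ i, 0 ≤ x i} = ⋂ i, {x : Fin k → ℝ | 0 ≤ x i} := by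
      ext x; simp [Set.mem_iInter]
    rw [this]
    exact convex_iInter fun i => convex_halfSpace_ge ⟨fun a b => rfl, fun c a => rfl⟩ 0
  have h2 : Convex ℝ {x : Fin k → ℝ | ∑ i, x i ≤ 1} :=
    convex_halfSpace_le ⟨fun a b => Finset.sum_add_distrib, fun c a => by simp [Finset.mul_sum]⟩ 1
  have : T k = {x : Fin k → ℝ | ∀ i, 0 ≤ x i} ∩ {x : Fin k → ℝ | ∑ i, x i ≤ 1} := rfl
  rw [this]; exact h1.inter h2

lemma stdSimplexSet_eq (k : ℕ) : stdSimplexSet k = T k := by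
  apply Set.Subset.antisymm
  · apply convexHull_min _ (convex_T k)
    rintro x (rfl | ⟨i, rfl⟩)
    · exact ⟨fun i => le_refl 0, by simp⟩
    · refine ⟨fun j => ?_, ?_⟩
      · dsimp; split <;> norm_num
      · simp [Finset.sum_ite_eq]
  · rintro x ⟨hx0, hx1⟩
    set s := ∑ i, x i with hs
    have hs0 : 0 ≤ s := Finset.sum_nonneg fun i _ => hx0 i
    rcases eq_or_lt_of_le hs0 with h | h
    · have hx : x = 0 := by
        funext i
        exact (Finset.sum_eq_zero_iff_of_nonneg (fun i _ => hx0 i)).1 h.symm i (Finset.mem_univ i)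
      rw [hx]; exact subset_convexHull ℝ _ (Set.mem_insert _ _)
    · have h1 : s⁻¹ • x ∈ stdSimplexSet k := by
        have hz : ∀ i ∈ Finset.univ, (fun j => if j = i then (1:ℝ) else 0)
            ∈ insert (0 : Fin k → ℝ) (Set.range fun i j => if j = i then (1 : ℝ) else 0) :=
          fun i _ => Set.mem_insert_of_mem _ ⟨i, rfl⟩
        have hcm := Finset.centerMass_mem_convexHull Finset.univ
          (fun i _ => hx0 i) (by rw [← hs]; exact h) hz
        have hcmeq : Finset.univ.centerMass x (fun i j => if j = i then (1:ℝ) else 0)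
            = s⁻¹ • x := by
          rw [Finset.centerMass, ← hs]
          congr 1
          funext j
          simp [Finset.sum_apply, mul_ite]
        rwa [hcmeq] at hcm
      have h0 : (0 : Fin k → ℝ) ∈ stdSimplexSet k :=
        subset_convexHull ℝ _ (Set.mem_insert _ _)
      have := (convex_convexHull ℝ _) h1 h0 hs0 (by linarith : (0:ℝ) ≤ 1 - s) (by ring)
      simpa [stdSimplexSet, smul_smul, mul_inv_cancel₀ (ne_of_gt h)] using this

lemma measurableSet_T (k : ℕ) : MeasurableSet (T k) := by
  have : T k = (⋂ i, {x : Fin k → ℝ | 0 ≤ x i}) ∩ {x : Fin k → ℝ | ∑ i, x i ≤ 1} := by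
    ext x; simp [T, Set.mem_iInter]
  rw [this]
  exact (MeasurableSet.iInter fun i =>
      measurableSet_le measurable_const (measurable_pi_apply i)).inter
    (measurableSet_le (Finset.measurable_sum _ fun i _ => measurable_pi_apply i) measurable_const)

lemma volume_T_lt_top (k : ℕ) : volume (T k) < ⊤ := by
  have hsub : T k ⊆ Set.Icc (0 : Fin k → ℝ) 1 := by
    rintro x ⟨h0, h1⟩
    refine ⟨fun i => h0 i, fun i => ?_⟩
    calc x i ≤ ∑ j, x j := Finset.single_le_sum (fun j _ => h0 j) (Finset.mem_univ i)
      _ ≤ 1 := h1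
  refine (measure_mono hsub).trans_lt ?_
  rw [← Set.pi_univ_Icc, volume_pi_pi]
  simp [Real.volume_Icc]

lemma integrableOn_exp (k : ℕ) (ω : Fin k → ℝ) :
    IntegrableOn (fun x : Fin k → ℝ =>
      Complex.exp (-(Complex.I * ((∑ i, ω i * x i : ℝ) : ℂ)))) (T k) := by
  refine Measure.integrableOn_of_bounded (volume_T_lt_top k).ne ?_ (M := 1) ?_
  · refine Continuous.aestronglyMeasurable ?_
    exact Complex.continuous_exp.comp (by continuity)
  · filter_upwards with x
    simp [Complex.norm_exp]

lemma fourierStd_eq (k : ℕ) (ω : Fin k → ℝ) :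
    fourierStd k ω = (k.factorial : ℂ) *
      ∫ x in T k, Complex.exp (-(Complex.I * ((∑ i, ω i * x i : ℝ) : ℂ))) := by
  have hfun : (fun x => ((stdSimplexDensity k x : ℝ) : ℂ) *
        Complex.exp (-(Complex.I * ((∑ i, ω i * x i : ℝ) : ℂ))))
      = (T k).indicator (fun x => (k.factorial : ℂ) *
        Complex.exp (-(Complex.I * ((∑ i, ω i * x i : ℝ) : ℂ)))) := by
    funext x
    rw [stdSimplexDensity, stdSimplexSet_eq]
    by_cases hx : x ∈ T k
    · simp [Set.indicator_of_mem hx]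
    · simp [Set.indicator_of_notMem hx]
  rw [fourierStd, fourierOf, hfun, integral_indicator (measurableSet_T k), MeasureTheory.integral_const_mul]

lemma key (m : ℕ) (ω : Fin (m+1) → ℝ) (hω : ω (Fin.last m) ≠ 0) :
    (∫ x in T (m+1), Complex.exp (-(Complex.I * ((∑ i, ω i * x i : ℝ) : ℂ)))) =
    ((∫ y in T m, Complex.exp (-(Complex.I * ((∑ j, ω j.castSucc * y j : ℝ) : ℂ)))) -
      Complex.exp (-(Complex.I * (ω (Fin.last m) : ℂ))) *
      (∫ y in T m, Complex.exp (-(Complex.I *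
        ((∑ j, (ω j.castSucc - ω (Fin.last m)) * y j : ℝ) : ℂ)))))
      / (Complex.I * (ω (Fin.last m) : ℂ)) := by
  set a := ω (Fin.last m) with ha
  have haC : (Complex.I * (a:ℂ)) ≠ 0 := mul_ne_zero Complex.I_ne_zero (by exact_mod_cast hω)
  set f : (Fin (m+1) → ℝ) → ℂ := (T (m+1)).indicator
    (fun x => Complex.exp (-(Complex.I * ((∑ i, ω i * x i : ℝ) : ℂ)))) with hfdef
  have hf_int : Integrable f :=
    (integrableOn_exp (m+1) ω).integrable_indicator (measurableSet_T (m+1))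
  set e := MeasurableEquiv.piFinSuccAbove (fun _ : Fin (m+1) => ℝ) (Fin.last m) with he
  have hmp : MeasurePreserving (⇑e.symm) :=
    (volume_preserving_piFinSuccAbove (fun _ : Fin (m+1) => ℝ) (Fin.last m)).symm e
  have hsymm : ∀ p : ℝ × (Fin m → ℝ), (⇑e.symm) p = Fin.snoc p.2 p.1 := by
    intro p
    rw [he]
    simp [MeasurableEquiv.piFinSuccAbove, Fin.insertNthEquiv, Fin.insertNth_last']
  have step1 : (∫ x in T (m+1), Complex.exp (-(Complex.I * ((∑ i, ω i * x i : ℝ) : ℂ))))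
      = ∫ x, f x := (integral_indicator (measurableSet_T (m+1))).symm
  have step2 : (∫ x, f x) = ∫ p : ℝ × (Fin m → ℝ), f (e.symm p) :=
    (hmp.integral_comp e.symm.measurableEmbedding f).symm
  have hGint : Integrable (fun p : ℝ × (Fin m → ℝ) => f (e.symm p)) :=
    (hmp.integrable_comp_emb e.symm.measurableEmbedding).2 hf_int
  have step3 : (∫ p : ℝ × (Fin m → ℝ), f (e.symm p))
      = ∫ y : Fin m → ℝ, ∫ t : ℝ, f (e.symm (t, y)) := by
    rw [Measure.volume_eq_prod] at hGint ⊢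
    exact integral_prod_symm _ hGint
  have hpt : ∀ (t : ℝ) (y : Fin m → ℝ),
      f (e.symm (t, y)) = if (∀ j, 0 ≤ y j) then
        (Set.Icc (0:ℝ) (1 - ∑ j, y j)).indicator
          (fun t => Complex.exp (-(Complex.I * ((∑ j, ω j.castSucc * y j : ℝ) : ℂ)))
            * Complex.exp (-(Complex.I * (a : ℂ)) * (t : ℂ))) t else 0 := by
    intro t y
    rw [hfdef, hsymm]
    have hsum : (∑ i, ω i * (Fin.snoc y t : Fin (m+1) → ℝ) i)
        = (∑ j, ω j.castSucc * y j) + a * t := by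
      rw [Fin.sum_univ_castSucc]; simp [ha]
    have hmem : (Fin.snoc y t : Fin (m+1) → ℝ) ∈ T (m+1) ↔
        (∀ j, 0 ≤ y j) ∧ (0 ≤ t ∧ t ≤ 1 - ∑ j, y j) := by
      constructor
      · rintro ⟨h0, h1⟩
        have h0' : ∀ j, 0 ≤ y j := fun j => by simpa using h0 j.castSucc
        have ht : 0 ≤ t := by simpa using h0 (Fin.last m)
        rw [Fin.sum_univ_castSucc] at h1
        simp only [Fin.snoc_castSucc, Fin.snoc_last] at h1
        exact ⟨h0', ht, by linarith⟩
      · rintro ⟨h0, ht0, ht1⟩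
        refine ⟨fun i => ?_, ?_⟩
        · refine Fin.lastCases ?_ ?_ i
          · simpa using ht0
          · intro j; simpa using h0 j
        · rw [Fin.sum_univ_castSucc]
          simp only [Fin.snoc_castSucc, Fin.snoc_last]
          linarith
    by_cases h0 : ∀ j, 0 ≤ y j
    · rw [if_pos h0]
      by_cases hmem2 : t ∈ Set.Icc (0:ℝ) (1 - ∑ j, y j)
      · rw [Set.indicator_of_mem (hmem.2 ⟨h0, hmem2.1, hmem2.2⟩), Set.indicator_of_mem hmem2,
          hsum, ← Complex.exp_add]
        congr 1
        push_cast
        ring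
      · rw [Set.indicator_of_notMem (fun hm => hmem2 ⟨(hmem.1 hm).2.1, (hmem.1 hm).2.2⟩),
          Set.indicator_of_notMem hmem2]
    · rw [if_neg h0, Set.indicator_of_notMem (fun hm => h0 (hmem.1 hm).1)]
  set v : (Fin m → ℝ) → ℂ := fun y =>
    (Complex.exp (-(Complex.I * ((∑ j, ω j.castSucc * y j : ℝ) : ℂ))) -
      Complex.exp (-(Complex.I * (a:ℂ))) *
      Complex.exp (-(Complex.I * ((∑ j, (ω j.castSucc - a) * y j : ℝ) : ℂ))))
      / (Complex.I * (a:ℂ)) with hv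
  have hinner : ∀ y : Fin m → ℝ, (∫ t : ℝ, f (e.symm (t, y))) = (T m).indicator v y := by
    intro y
    simp_rw [hpt]
    by_cases h0 : ∀ j, 0 ≤ y j
    · simp only [if_pos h0]
      by_cases h1 : (∑ j, y j) ≤ 1
      · have hy : y ∈ T m := ⟨h0, h1⟩
        rw [Set.indicator_of_mem hy, integral_indicator measurableSet_Icc,
          integral_Icc_eq_integral_Ioc,
          ← intervalIntegral.integral_of_le (by linarith : (0:ℝ) ≤ 1 - ∑ j, y j),
          intervalIntegral.integral_const_mul, integral_exp_mul_complex (neg_ne_zero.2 haC)]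
        have hprod : Complex.exp (-(Complex.I * ((∑ j, ω j.castSucc * y j : ℝ) : ℂ))) *
            Complex.exp (-(Complex.I * (a:ℂ)) * ((1 - ∑ j, y j : ℝ) : ℂ))
            = Complex.exp (-(Complex.I * (a:ℂ))) *
              Complex.exp (-(Complex.I * ((∑ j, (ω j.castSucc - a) * y j : ℝ) : ℂ))) := by
          rw [← Complex.exp_add, ← Complex.exp_add]
          congr 1
          have hss : (∑ j, (ω j.castSucc - a) * y j : ℝ)
              = (∑ j, ω j.castSucc * y j) - a * ∑ j, y j := by
            simp [sub_mul, Finset.sum_sub_distrib, Finset.mul_sum]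
          rw [hss]
          push_cast
          ring
        rw [hv]
        simp only []
        rw [Complex.ofReal_zero, mul_zero, Complex.exp_zero]
        have hfin : ∀ (c : ℂ), c ≠ 0 → ∀ X Ec : ℂ,
            Ec * ((X - 1) / -c) = (Ec - Ec * X) / c := by
          intro c hc X Ec
          rw [div_neg, mul_neg, ← mul_div_assoc, ← neg_div]
          congr 1
          ring
        rw [hfin _ haC, hprod]
      · rw [Set.indicator_of_notMem (fun hy => h1 hy.2),
          Set.Icc_eq_empty (by push_neg; linarith [not_le.1 h1] : ¬ (0:ℝ) ≤ 1 - ∑ j, y j)]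
        simp
    · simp only [if_neg h0, integral_zero]
      rw [Set.indicator_of_notMem (fun hy => h0 hy.1)]
  rw [step1, step2, step3]
  have step4 : (∫ y : Fin m → ℝ, ∫ t : ℝ, f (e.symm (t, y)))
      = ∫ y : Fin m → ℝ, (T m).indicator v y := by simp_rw [hinner]
  rw [step4, integral_indicator (measurableSet_T m), hv]
  rw [MeasureTheory.integral_div]
  congr 1
  rw [integral_sub (integrableOn_exp m (fun j => ω j.castSucc))
    (((integrableOn_exp m (fun j => ω j.castSucc - a))).const_mul _),
    MeasureTheory.integral_const_mul]

end SimplexAux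

/-- **Recursion for the Fourier transform of the standard simplex** -/
theorem fourier_std_simplex_recursion
    (m : ℕ) (hm : 1 ≤ m) (ω : Fin (m+1) → ℝ) (hω : ω (Fin.last m) ≠ 0) :
    fourierStd (m+1) ω =
      (((m : ℂ) + 1) / (Complex.I * (ω (Fin.last m) : ℂ))) *
        (fourierStd m (fun i => ω i.castSucc) -
          Complex.exp (-(Complex.I * (ω (Fin.last m) : ℂ))) *
            fourierStd m (fun i => ω i.castSucc - ω (Fin.last m))) := by
  rw [SimplexAux.fourierStd_eq (m+1) ω, SimplexAux.fourierStd_eq m (fun i => ω i.castSucc),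
    SimplexAux.fourierStd_eq m (fun i => ω i.castSucc - ω (Fin.last m)),
    SimplexAux.key m ω hω]
  have hfac : (((m+1).factorial : ℕ) : ℂ) = ((m:ℂ)+1) * (m.factorial : ℂ) := by
    push_cast [Nat.factorial_succ]; ring
  have haC : (Complex.I * (ω (Fin.last m) : ℂ)) ≠ 0 :=
    mul_ne_zero Complex.I_ne_zero (by exact_mod_cast hω)
  rw [hfac]
  field_simp
end
end

section
/- For every integer k ≥ 1 and every ω = (ω₁,…,ω_k) ∈ ℝ^k whose coordinates are nonzero and pairwise distinct, the Fourier transform of the uniform density on the standard simplex has the explicit form F_{Δ_k}(ω) = (k!/i^k) · Σ_{ℓ=1}^{k} (1 − e^{−i ω_ℓ}) · [ ω_ℓ · ∏_{j ≠ ℓ} (ω_j − ω_ℓ) ]^{−1}. -/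
open MeasureTheory Real

noncomputable section

open Finset

def cornerSet (k : ℕ) : Set (Fin k → ℝ) := {x | (∀ i, 0 ≤ x i) ∧ ∑ i, x i ≤ 1}

lemma convex_cornerSet (k : ℕ) : Convex ℝ (cornerSet k) := by
  intro x hx y hy a b ha hb hab
  refine ⟨fun i => by
    have h1 := hx.1 i; have h2 := hy.1 i
    have : (a • x + b • y) i = a * x i + b * y i := by simp
    rw [this]; positivity, ?_⟩
  have : ∑ i, (a • x + b • y) i = a * ∑ i, x i + b * ∑ i, y i := by
    simp [Finset.mul_sum, Finset.sum_add_distrib]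
  rw [this]
  calc a * ∑ i, x i + b * ∑ i, y i ≤ a * 1 + b * 1 := by
        gcongr; exacts [hx.2, hy.2]
    _ = 1 := by linarith

lemma stdSimplexSet_eq (k : ℕ) : stdSimplexSet k = cornerSet k := by
  apply le_antisymm
  · apply convexHull_min _ (convex_cornerSet k)
    rintro x (rfl | ⟨i, rfl⟩)
    · exact ⟨fun i => le_refl _, by simp⟩
    · constructor
      · intro j; dsimp only; split <;> norm_num
      · simp
  · intro x hx
    by_cases hs : ∑ i, x i = 0
    · have hx0 : x = 0 := by
        funext i
        have := (Finset.sum_eq_zero_iff_of_nonneg (fun j _ => hx.1 j)).1 hs i (Finset.mem_univ i)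
        simpa using this
      exact subset_convexHull ℝ _ (hx0 ▸ Set.mem_insert _ _)
    · set s := ∑ i, x i with hsdef
      have hs0 : 0 ≤ s := Finset.sum_nonneg fun j _ => hx.1 j
      have hspos : 0 < s := lt_of_le_of_ne hs0 (Ne.symm hs)
      have hmem : (fun i => x i / s) ∈ stdSimplex ℝ (Fin k) := by
        refine ⟨fun i => div_nonneg (hx.1 i) hs0, ?_⟩
        rw [← Finset.sum_div]
        field_simp
        exact hsdef.symm
      have h1 : (fun i => x i / s) ∈ stdSimplexSet k := by
        have hr : (Set.range fun (i : Fin k) (j : Fin k) => if j = i then (1:ℝ) else 0)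
            = (Set.range fun (i : Fin k) (j : Fin k) => if i = j then (1:ℝ) else 0) := by
          apply congrArg; funext i; funext j; simp [eq_comm]
        have := convexHull_basis_eq_stdSimplex (R := ℝ) (Fin k)
        have hsub : stdSimplex ℝ (Fin k) ⊆ stdSimplexSet k := by
          rw [← this, stdSimplexSet, hr]
          apply convexHull_mono
          convert Set.subset_insert (0 : Fin k → ℝ) _ using 2
        exact hsub hmem
      have h0 : (0 : Fin k → ℝ) ∈ stdSimplexSet k :=
        subset_convexHull ℝ _ (Set.mem_insert _ _)
      have := (convex_convexHull ℝ _) h0 h1 (by linarith [hx.2] : (0:ℝ) ≤ 1 - s) hs0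
        (by ring : (1 - s) + s = 1)
      convert this using 1
      · rfl
      · funext i
        show x i = (1 - s) * 0 + s * (x i / s)
        field_simp
        ring

lemma isClosed_cornerSet (k : ℕ) : IsClosed (cornerSet k) := by
  have h1 : cornerSet k = (⋂ i, {x : Fin k → ℝ | 0 ≤ x i}) ∩ {x | ∑ i, x i ≤ 1} := by
    ext x; simp [cornerSet, Set.mem_iInter]
  rw [h1]
  refine IsClosed.inter (isClosed_iInter fun i => ?_) ?_
  · exact isClosed_le continuous_const (continuous_apply i)
  · exact isClosed_le (by continuity) continuous_const

lemma isCompact_cornerSet (k : ℕ) : IsCompact (cornerSet k) := by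
  have hsub : cornerSet k ⊆ Set.Icc (0 : Fin k → ℝ) 1 := by
    intro x hx
    constructor
    · intro i; exact hx.1 i
    · intro i
      have : x i ≤ ∑ j, x j := Finset.single_le_sum (fun j _ => hx.1 j) (Finset.mem_univ i)
      exact this.trans hx.2
  exact (isCompact_Icc).of_isClosed_subset (isClosed_cornerSet k) hsub

lemma measurableSet_cornerSet (k : ℕ) : MeasurableSet (cornerSet k) :=
  (isClosed_cornerSet k).measurableSet

def eker (k : ℕ) (ω : Fin k → ℝ) (x : Fin k → ℝ) : ℂ :=
  Complex.exp (-(Complex.I * ((∑ i, ω i * x i : ℝ) : ℂ)))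

lemma continuous_eker (k : ℕ) (ω : Fin k → ℝ) : Continuous (eker k ω) := by
  apply Complex.continuous_exp.comp
  apply Continuous.neg
  apply Continuous.mul continuous_const
  exact Complex.continuous_ofReal.comp (by continuity)

def Ik (k : ℕ) (ω : Fin k → ℝ) : ℂ := ∫ x in cornerSet k, eker k ω x

lemma integrableOn_eker (k : ℕ) (ω : Fin k → ℝ) :
    IntegrableOn (eker k ω) (cornerSet k) :=
  (continuous_eker k ω).continuousOn.integrableOn_compact (isCompact_cornerSet k)

lemma Ik_zero (ω : Fin 0 → ℝ) : Ik 0 ω = 1 := by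
  have h1 : cornerSet 0 = Set.univ := by
    ext x; simp [cornerSet]
  have h2 : eker 0 ω = fun _ => 1 := by
    funext x; simp [eker]
  rw [Ik, h1, h2, setIntegral_univ, integral_const]
  have : (volume : Measure (Fin 0 → ℝ)) Set.univ = 1 := by
    rw [MeasureTheory.volume_pi, Measure.pi_univ]; simp
  simp [Measure.real, this]

lemma Ik_succ (k : ℕ) (ω : Fin (k+1) → ℝ) (hb : ω 0 ≠ 0) :
    Ik (k+1) ω = (Complex.I * (ω 0 : ℂ))⁻¹ *
      (Ik k (fun j => ω j.succ) -
        Complex.exp (-(Complex.I * (ω 0 : ℂ))) * Ik k (fun j => ω j.succ - ω 0)) := by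
  classical
  set b : ℝ := ω 0 with hbdef
  set ω' : Fin k → ℝ := fun j => ω j.succ with hω'
  -- the equivalence
  set e := MeasurableEquiv.piFinSuccAbove (fun _ : Fin (k+1) => ℝ) 0 with he
  have hesymm : ∀ (t : ℝ) (y : Fin k → ℝ), e.symm (t, y) = Fin.cons t y := by
    intro t y
    simp [he, MeasurableEquiv.piFinSuccAbove, Fin.consEquiv]
  -- step 1 : to indicator
  have h1 : Ik (k+1) ω = ∫ x : Fin (k+1) → ℝ,
      Set.indicator (cornerSet (k+1)) (eker (k+1) ω) x := by
    rw [Ik, integral_indicator (measurableSet_cornerSet _)]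
  -- step 2 : composed with e.symm
  have hmp : MeasurePreserving (⇑e.symm) volume volume :=
    (volume_preserving_piFinSuccAbove (fun _ : Fin (k+1) => ℝ) 0).symm e
  have h2 : (∫ x : Fin (k+1) → ℝ, Set.indicator (cornerSet (k+1)) (eker (k+1) ω) x)
      = ∫ z : ℝ × (Fin k → ℝ), Set.indicator (cornerSet (k+1)) (eker (k+1) ω) (e.symm z) := by
    rw [hmp.integral_comp e.symm.measurableEmbedding]
  -- the pointwise identity
  set G : ℝ × (Fin k → ℝ) → ℂ := fun z =>
    Set.indicator (cornerSet k) (fun y =>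
      Set.indicator (Set.Icc (0:ℝ) (1 - ∑ j, y j)) (fun t => eker (k+1) ω (Fin.cons t y)) z.1) z.2
    with hG
  have hFG : ∀ z : ℝ × (Fin k → ℝ),
      Set.indicator (cornerSet (k+1)) (eker (k+1) ω) (e.symm z) = G z := by
    rintro ⟨t, y⟩
    rw [hesymm]
    have hmemiff : (Fin.cons t y ∈ cornerSet (k+1)) ↔
        (y ∈ cornerSet k ∧ t ∈ Set.Icc (0:ℝ) (1 - ∑ j, y j)) := by
      simp only [cornerSet, Set.mem_setOf_eq, Set.mem_Icc, Fin.forall_fin_succ,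
        Fin.cons_zero, Fin.cons_succ, Fin.sum_univ_succ]
      constructor
      · rintro ⟨⟨ht0, hy0⟩, hsum⟩
        have hy : ∑ j, y j ≤ 1 := by linarith
        exact ⟨⟨hy0, hy⟩, ht0, by linarith⟩
      · rintro ⟨⟨hy0, _⟩, ht0, ht1⟩
        exact ⟨⟨ht0, hy0⟩, by linarith⟩
    by_cases hmem : Fin.cons t y ∈ cornerSet (k+1)
    · obtain ⟨hy, ht⟩ := hmemiff.1 hmem
      rw [Set.indicator_of_mem hmem, hG]
      simp only
      rw [Set.indicator_of_mem hy, Set.indicator_of_mem ht]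
    · rw [Set.indicator_of_notMem hmem, hG]
      simp only
      by_cases hy : y ∈ cornerSet k
      · rw [Set.indicator_of_mem hy]
        have ht : t ∉ Set.Icc (0:ℝ) (1 - ∑ j, y j) := fun ht => hmem (hmemiff.2 ⟨hy, ht⟩)
        rw [Set.indicator_of_notMem ht]
      · rw [Set.indicator_of_notMem hy]
  -- integrability of G
  have hIntF : Integrable (fun z : ℝ × (Fin k → ℝ) =>
      Set.indicator (cornerSet (k+1)) (eker (k+1) ω) (e.symm z)) := by
    rw [show (fun z : ℝ × (Fin k → ℝ) =>
      Set.indicator (cornerSet (k+1)) (eker (k+1) ω) (e.symm z))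
        = (Set.indicator (cornerSet (k+1)) (eker (k+1) ω)) ∘ ⇑e.symm from rfl]
    rw [hmp.integrable_comp_emb e.symm.measurableEmbedding]
    rw [integrable_indicator_iff (measurableSet_cornerSet _)]
    exact integrableOn_eker _ _
  have hIntG : Integrable G := by
    have := hIntF
    rwa [show (fun z : ℝ × (Fin k → ℝ) =>
      Set.indicator (cornerSet (k+1)) (eker (k+1) ω) (e.symm z)) = G from funext hFG] at this
  -- Fubini
  have h3 : (∫ z : ℝ × (Fin k → ℝ), G z) = ∫ y : Fin k → ℝ, ∫ t : ℝ, G (t, y) := by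
    have : (volume : Measure (ℝ × (Fin k → ℝ))) = (volume : Measure ℝ).prod volume := rfl
    rw [this] at hIntG ⊢
    exact integral_prod_symm G hIntG
  -- inner integral computation
  have hinner : ∀ y : Fin k → ℝ, (∫ t : ℝ, G (t, y)) =
      Set.indicator (cornerSet k) (fun y =>
        (Complex.I * (b:ℂ))⁻¹ * (eker k ω' y -
          Complex.exp (-(Complex.I * (b:ℂ))) * eker k (fun j => ω' j - b) y)) y := by
    intro y
    by_cases hy : y ∈ cornerSet k
    · rw [Set.indicator_of_mem hy]
      have hGy : ∀ t, G (t, y) = Set.indicator (Set.Icc (0:ℝ) (1 - ∑ j, y j))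
          (fun t => eker (k+1) ω (Fin.cons t y)) t := by
        intro t; rw [hG]; simp only; rw [Set.indicator_of_mem hy]
      simp only [hGy]
      rw [integral_indicator measurableSet_Icc]
      have hs : (0:ℝ) ≤ 1 - ∑ j, y j := by
        have h2 : ∑ j, y j ≤ 1 := hy.2
        linarith
      set s : ℝ := 1 - ∑ j, y j with hsdef
      have hval : ∀ t : ℝ, eker (k+1) ω (Fin.cons t y) =
          Complex.exp (-(Complex.I * ((∑ j, ω' j * y j : ℝ) : ℂ))) *
            Complex.exp ((-(Complex.I * (b:ℂ))) * (t:ℂ)) := by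
        intro t
        rw [eker, ← Complex.exp_add]
        congr 1
        rw [Fin.sum_univ_succ]
        simp only [Fin.cons_zero, Fin.cons_succ]
        push_cast
        ring
      simp only [hval]
      rw [MeasureTheory.integral_Icc_eq_integral_Ioc,
        ← intervalIntegral.integral_of_le hs,
        intervalIntegral.integral_const_mul, integral_exp_mul_complex (by
          simp only [neg_ne_zero]
          exact mul_ne_zero Complex.I_ne_zero (by exact_mod_cast hb))]
      have hek1 : eker k ω' y = Complex.exp (-(Complex.I * ((∑ j, ω' j * y j : ℝ) : ℂ))) := rfl
      have hek2 : eker k (fun j => ω' j - b) y =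
          Complex.exp (-(Complex.I * ((∑ j, (ω' j - b) * y j : ℝ) : ℂ))) := rfl
      rw [hek1, hek2]
      have hb' : (b:ℂ) ≠ 0 := by exact_mod_cast hb
      have hexp : Complex.exp (-(Complex.I * (b:ℂ)) * (s:ℂ)) *
          Complex.exp (-(Complex.I * ((∑ j, ω' j * y j : ℝ) : ℂ))) =
          Complex.exp (-(Complex.I * (b:ℂ))) *
            Complex.exp (-(Complex.I * ((∑ j, (ω' j - b) * y j : ℝ) : ℂ))) := by
        rw [← Complex.exp_add, ← Complex.exp_add]
        congr 1
        have hc' : (∑ j, (ω' j - b) * y j) = (∑ j, ω' j * y j) - b * ∑ j, y j := by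
          rw [Finset.mul_sum, ← Finset.sum_sub_distrib]
          exact Finset.sum_congr rfl (fun j _ => by ring)
        rw [hsdef, hc']
        push_cast
        ring
      rw [Complex.ofReal_zero, mul_zero, Complex.exp_zero]
      linear_combination (-(Complex.I * (b:ℂ)))⁻¹ * hexp
    · rw [Set.indicator_of_notMem hy]
      have hGy : ∀ t, G (t, y) = 0 := by
        intro t; rw [hG]; simp only; rw [Set.indicator_of_notMem hy]
      simp only [hGy, integral_zero]
  -- outer integral
  have h4 : (∫ y : Fin k → ℝ, ∫ t : ℝ, G (t, y)) =
      ∫ y in cornerSet k, (Complex.I * (b:ℂ))⁻¹ * (eker k ω' y -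
          Complex.exp (-(Complex.I * (b:ℂ))) * eker k (fun j => ω' j - b) y) := by
    simp only [hinner]
    rw [integral_indicator (measurableSet_cornerSet _)]
  rw [h1, h2, funext hFG, h3, h4]
  rw [MeasureTheory.integral_const_mul, integral_sub (integrableOn_eker _ _)
    ((integrableOn_eker k (fun j => ω' j - b)).const_mul _), MeasureTheory.integral_const_mul]
  rfl

lemma prod_erase_eq_ite {M : Type*} [CommMonoid M] {n : ℕ} (g : Fin n → M) (ℓ : Fin n) :
    ∏ j ∈ univ.erase ℓ, g j = ∏ j, (if j = ℓ then 1 else g j) := by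
  rw [← Finset.prod_erase (univ : Finset (Fin n)) (f := fun j => if j = ℓ then 1 else g j)
    (by simp : (if ℓ = ℓ then (1:M) else g ℓ) = 1)]
  exact Finset.prod_congr rfl (fun j hj => by
    rw [if_neg (Finset.ne_of_mem_erase hj)])

lemma prod_erase_zero {M : Type*} [CommMonoid M] {n : ℕ} (g : Fin (n+1) → M) :
    ∏ j ∈ univ.erase (0 : Fin (n+1)), g j = ∏ j : Fin n, g j.succ := by
  rw [prod_erase_eq_ite, Fin.prod_univ_succ]
  simp [Fin.succ_ne_zero]

lemma prod_erase_succ {M : Type*} [CommMonoid M] {n : ℕ} (g : Fin (n+1) → M) (ℓ : Fin n) :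
    ∏ j ∈ univ.erase ℓ.succ, g j = g 0 * ∏ j ∈ univ.erase ℓ, g j.succ := by
  rw [prod_erase_eq_ite, Fin.prod_univ_succ, prod_erase_eq_ite]
  rw [if_neg (Fin.succ_ne_zero ℓ).symm]
  congr 1
  exact Finset.prod_congr rfl (fun j _ => by simp [Fin.succ_inj])

/-- Partial fraction identity. -/
lemma pf_identity : ∀ (k : ℕ) (y : Fin (k+1) → ℂ), (∀ i, y i ≠ 0) → Function.Injective y →
    ∑ ℓ, (y ℓ * ∏ j ∈ univ.erase ℓ, (y j - y ℓ))⁻¹ = (∏ j, y j)⁻¹ := by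
  intro k
  induction k with
  | zero =>
    intro y _ _
    rw [Fin.sum_univ_one, Fin.prod_univ_one, prod_erase_zero]
    simp
  | succ k ih =>
    intro y hy hinj
    set b : ℂ := y 0 with hb
    set z : Fin (k+1) → ℂ := fun j => y j.succ with hz
    have hzinj : Function.Injective z := fun a c h =>
      Fin.succ_injective _ (hinj h)
    have hzb : ∀ j, z j ≠ b := fun j h => Fin.succ_ne_zero j (hinj h)
    have hz0 : ∀ j, z j ≠ 0 := fun j => hy j.succ
    have hb0 : b ≠ 0 := hy 0
    have hP0 : ∀ ℓ : Fin (k+1), (∏ j ∈ univ.erase ℓ, (z j - z ℓ)) ≠ 0 := by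
      intro ℓ
      rw [Finset.prod_ne_zero_iff]
      intro j hj
      exact sub_ne_zero.2 fun h => (Finset.ne_of_mem_erase hj) (hzinj h)
    rw [Fin.sum_univ_succ]
    have h0 : (y 0 * ∏ j ∈ univ.erase (0 : Fin (k+2)), (y j - y 0))⁻¹
        = (b * ∏ j : Fin (k+1), (z j - b))⁻¹ := by
      rw [prod_erase_zero]
    have hsucc : ∀ ℓ : Fin (k+1),
        (y ℓ.succ * ∏ j ∈ univ.erase ℓ.succ, (y j - y ℓ.succ))⁻¹
        = b⁻¹ * ((z ℓ * ∏ j ∈ univ.erase ℓ, (z j - z ℓ))⁻¹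
            - ((z ℓ - b) * ∏ j ∈ univ.erase ℓ, (z j - z ℓ))⁻¹) := by
      intro ℓ
      rw [prod_erase_succ]
      have h1 : z ℓ ≠ 0 := hz0 ℓ
      have h2 : z ℓ - b ≠ 0 := sub_ne_zero.2 (hzb ℓ)
      have h2' : b - z ℓ ≠ 0 := sub_ne_zero.2 (fun h => hzb ℓ h.symm)
      have hscal : (z ℓ)⁻¹ * (b - z ℓ)⁻¹ = b⁻¹ * ((z ℓ)⁻¹ - (z ℓ - b)⁻¹) := by
        field_simp
        ring
      have hy0 : y 0 - y ℓ.succ = b - z ℓ := rfl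
      have hyz : y ℓ.succ = z ℓ := rfl
      rw [hy0, hyz]
      have hPP : (∏ j ∈ univ.erase ℓ, (y j.succ - z ℓ)) = ∏ j ∈ univ.erase ℓ, (z j - z ℓ) := rfl
      rw [hPP]
      simp only [mul_inv]
      set P := (∏ j ∈ univ.erase ℓ, (z j - z ℓ))⁻¹ with hP
      linear_combination P * hscal
    rw [h0, Finset.sum_congr rfl (fun ℓ _ => hsucc ℓ), ← Finset.mul_sum,
      Finset.sum_sub_distrib]
    have hIH1 : ∑ ℓ, (z ℓ * ∏ j ∈ univ.erase ℓ, (z j - z ℓ))⁻¹ = (∏ j, z j)⁻¹ :=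
      ih z hz0 hzinj
    have hIH2 : ∑ ℓ, ((z ℓ - b) * ∏ j ∈ univ.erase ℓ, (z j - z ℓ))⁻¹
        = (∏ j, (z j - b))⁻¹ := by
      have := ih (fun j => z j - b) (fun j => sub_ne_zero.2 (hzb j))
        (fun a c h => hzinj (by linear_combination h))
      simpa using this
    have hRHS : (∏ j : Fin (k+2), y j)⁻¹ = (b * ∏ j, z j)⁻¹ := by
      rw [Fin.prod_univ_succ]
    rw [hIH1, hIH2, hRHS]
    simp only [mul_inv]
    ring

lemma hscal_lemma (b zq Eb Ez : ℂ) (hb : b ≠ 0) (hz : zq ≠ 0) (h2 : zq - b ≠ 0)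
    (h2' : b - zq ≠ 0) (hEb : Eb ≠ 0) :
    b⁻¹ * ((1 - Ez) * zq⁻¹ - Eb * ((1 - Ez * Eb⁻¹) * (zq - b)⁻¹))
      = (1 - Ez) * (zq⁻¹ * (b - zq)⁻¹) + (1 - Eb) * (b⁻¹ * (zq - b)⁻¹) := by
  field_simp
  ring

def SkC (k : ℕ) (v : Fin k → ℂ) : ℂ :=
  (Complex.I ^ k)⁻¹ * ∑ ℓ, (1 - Complex.exp (-(Complex.I * v ℓ))) *
    (v ℓ * ∏ j ∈ univ.erase ℓ, (v j - v ℓ))⁻¹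

lemma key_alg (k : ℕ) (v : Fin (k+2) → ℂ) (hv : ∀ i, v i ≠ 0)
    (hinj : Function.Injective v) :
    (Complex.I * v 0)⁻¹ * (SkC (k+1) (fun j => v j.succ) -
      Complex.exp (-(Complex.I * v 0)) * SkC (k+1) (fun j => v j.succ - v 0))
    = SkC (k+2) v := by
  set b : ℂ := v 0 with hb
  set z : Fin (k+1) → ℂ := fun j => v j.succ with hzdef
  have hzinj : Function.Injective z := fun a c h => Fin.succ_injective _ (hinj h)
  have hzb : ∀ j, z j ≠ b := fun j h => Fin.succ_ne_zero j (hinj h)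
  have hz0 : ∀ j, z j ≠ 0 := fun j => hv j.succ
  have hb0 : b ≠ 0 := hv 0
  set P : Fin (k+1) → ℂ := fun ℓ => ∏ j ∈ univ.erase ℓ, (z j - z ℓ) with hPdef
  have hP0 : ∀ ℓ, P ℓ ≠ 0 := by
    intro ℓ
    rw [hPdef]
    rw [Finset.prod_ne_zero_iff]
    intro j hj
    exact sub_ne_zero.2 fun h => (Finset.ne_of_mem_erase hj) (hzinj h)
  set Eb : ℂ := Complex.exp (-(Complex.I * b)) with hEb
  have hEbne : Eb ≠ 0 := Complex.exp_ne_zero _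
  set Q : ℂ := ∏ j, (z j - b) with hQ
  have hQ0 : Q ≠ 0 := Finset.prod_ne_zero_iff.2 fun j _ => sub_ne_zero.2 (hzb j)
  -- expansion of the three SkC's
  have hS1 : SkC (k+1) z = (Complex.I ^ (k+1))⁻¹ *
      ∑ ℓ, (1 - Complex.exp (-(Complex.I * z ℓ))) * (z ℓ * P ℓ)⁻¹ := rfl
  have hS2 : SkC (k+1) (fun j => z j - b) = (Complex.I ^ (k+1))⁻¹ *
      ∑ ℓ, (1 - Complex.exp (-(Complex.I * (z ℓ - b)))) * ((z ℓ - b) * P ℓ)⁻¹ := by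
    rw [SkC]
    congr 1
    refine Finset.sum_congr rfl (fun ℓ _ => ?_)
    congr 3
    rw [hPdef]
    exact Finset.prod_congr rfl (fun j _ => by ring)
  have hS3 : SkC (k+2) v = (Complex.I ^ (k+2))⁻¹ *
      ((1 - Eb) * (b * Q)⁻¹ +
        ∑ ℓ, (1 - Complex.exp (-(Complex.I * z ℓ))) * (z ℓ * ((b - z ℓ) * P ℓ))⁻¹) := by
    rw [SkC, Fin.sum_univ_succ]
    congr 2
    · rw [prod_erase_zero]
    · refine Finset.sum_congr rfl (fun ℓ _ => ?_)
      rw [prod_erase_succ]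
  -- the partial fraction sum
  have hpf : ∑ ℓ, ((z ℓ - b) * P ℓ)⁻¹ = Q⁻¹ := by
    have := pf_identity k (fun j => z j - b) (fun j => sub_ne_zero.2 (hzb j))
      (fun a c h => hzinj (by linear_combination h))
    rw [hQ]
    rw [← this]
    refine Finset.sum_congr rfl (fun ℓ _ => ?_)
    congr 2
    rw [hPdef]
    exact Finset.prod_congr rfl (fun j _ => by ring)
  -- per-term identity
  have hper : ∀ ℓ, (Complex.I * b)⁻¹ *
      ((Complex.I ^ (k+1))⁻¹ * ((1 - Complex.exp (-(Complex.I * z ℓ))) * (z ℓ * P ℓ)⁻¹)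
        - Eb * ((Complex.I ^ (k+1))⁻¹ *
          ((1 - Complex.exp (-(Complex.I * (z ℓ - b)))) * ((z ℓ - b) * P ℓ)⁻¹)))
      = (Complex.I ^ (k+2))⁻¹ *
          ((1 - Complex.exp (-(Complex.I * z ℓ))) * (z ℓ * ((b - z ℓ) * P ℓ))⁻¹
            + (1 - Eb) * (b⁻¹ * ((z ℓ - b) * P ℓ)⁻¹)) := by
    intro ℓ
    have hEd : Complex.exp (-(Complex.I * (z ℓ - b))) =
        Complex.exp (-(Complex.I * z ℓ)) * Eb⁻¹ := by
      rw [hEb, ← Complex.exp_neg, ← Complex.exp_add]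
      congr 1
      ring
    rw [hEd]
    have h1 : z ℓ ≠ 0 := hz0 ℓ
    have h2 : z ℓ - b ≠ 0 := sub_ne_zero.2 (hzb ℓ)
    have h2' : b - z ℓ ≠ 0 := sub_ne_zero.2 fun h => hzb ℓ h.symm
    have hs := hscal_lemma b (z ℓ) Eb (Complex.exp (-(Complex.I * z ℓ))) hb0 h1 h2 h2' hEbne
    simp only [pow_succ, mul_inv]
    linear_combination ((Complex.I ^ k)⁻¹ * Complex.I⁻¹ * Complex.I⁻¹ * (P ℓ)⁻¹) * hs
  -- assemble
  rw [hS1, hS2, hS3]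
  simp only [Finset.mul_sum]
  rw [← Finset.sum_sub_distrib, Finset.mul_sum,
    Finset.sum_congr rfl (fun ℓ _ => hper ℓ)]
  simp only [mul_add, Finset.sum_add_distrib, ← Finset.mul_sum]
  rw [hpf]
  simp only [mul_inv]
  ring

lemma main_induction : ∀ (k : ℕ), 1 ≤ k → ∀ (ω : Fin k → ℝ), (∀ i, ω i ≠ 0) →
    Function.Injective ω → Ik k ω = SkC k (fun i => ((ω i : ℝ) : ℂ)) := by
  intro k hk
  induction k, hk using Nat.le_induction with
  | base =>
    intro ω hne hinj
    rw [Ik_succ 0 ω (hne 0), Ik_zero, Ik_zero, SkC]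
    rw [Fin.sum_univ_one, prod_erase_zero]
    have hb : ((ω 0 : ℝ) : ℂ) ≠ 0 := by exact_mod_cast hne 0
    have hI : Complex.I ≠ 0 := Complex.I_ne_zero
    simp only [Fin.prod_univ_zero, mul_one, pow_one, mul_inv]
    ring
  | succ n hn ih =>
    intro ω hne hinj
    obtain ⟨m, rfl⟩ : ∃ m, n = m + 1 := ⟨n - 1, (Nat.succ_pred_eq_of_pos hn).symm⟩
    set v : Fin (m+2) → ℂ := fun i => ((ω i : ℝ) : ℂ) with hv
    have hvne : ∀ i, v i ≠ 0 := fun i => by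
      simp only [hv]; exact_mod_cast hne i
    have hvinj : Function.Injective v := fun a c h => by
      simp only [hv] at h
      exact hinj (by exact_mod_cast h)
    have h1 : Ik (m+1) (fun j => ω j.succ) = SkC (m+1) (fun j => v j.succ) := by
      exact ih (fun j => ω j.succ) (fun j => hne j.succ)
        (fun a c h => Fin.succ_injective _ (hinj h))
    have h2 : Ik (m+1) (fun j => ω j.succ - ω 0)
        = SkC (m+1) (fun j => v j.succ - v 0) := by
      have := ih (fun j => ω j.succ - ω 0)
        (fun j h => Fin.succ_ne_zero j (hinj (sub_eq_zero.1 h)))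
        (fun a c h => Fin.succ_injective _ (hinj (by
          have h' : ω a.succ - ω 0 = ω c.succ - ω 0 := h
          linarith)))
      rw [this]
      congr 1
      funext j
      push_cast
      rfl
    rw [Ik_succ (m+1) ω (hne 0), h1, h2]
    exact key_alg m v hvne hvinj

lemma fourier_eq (k : ℕ) (ω : Fin k → ℝ) :
    fourierStd k ω = (k.factorial : ℂ) * Ik k ω := by
  rw [fourierStd, fourierOf]
  have h : ∀ x : Fin k → ℝ, ((stdSimplexDensity k x : ℝ) : ℂ) *
      Complex.exp (-(Complex.I * ((∑ i, ω i * x i : ℝ) : ℂ)))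
      = Set.indicator (cornerSet k) (fun x => (k.factorial : ℂ) * eker k ω x) x := by
    intro x
    rw [stdSimplexDensity, stdSimplexSet_eq]
    by_cases hx : x ∈ cornerSet k
    · rw [Set.indicator_of_mem hx, Set.indicator_of_mem hx]; rfl
    · rw [Set.indicator_of_notMem hx, Set.indicator_of_notMem hx]; simp
  simp only [h]
  rw [integral_indicator (measurableSet_cornerSet k), MeasureTheory.integral_const_mul]
  rfl

/-- **Explicit Fourier transform of the standard simplex.**
For `ω` with nonzero, pairwise-distinct coordinates,
`F_{Δ_k}(ω) = (k!/iᵏ)·Σ_ℓ (1 − e^{−iω_ℓ})·[ω_ℓ·∏_{j≠ℓ}(ω_j − ω_ℓ)]⁻¹`. -/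
theorem fourier_std_simplex_explicit
    (k : ℕ) (hk : 1 ≤ k) (ω : Fin k → ℝ)
    (hne : ∀ i, ω i ≠ 0) (hinj : Function.Injective ω) :
    fourierStd k ω =
      ((k.factorial : ℂ) / Complex.I ^ k) *
        ∑ ℓ : Fin k, (1 - Complex.exp (-(Complex.I * (ω ℓ : ℂ)))) *
          ((ω ℓ : ℂ) * ∏ j ∈ Finset.univ.erase ℓ, ((ω j : ℂ) - (ω ℓ : ℂ)))⁻¹ := by
  rw [fourier_eq, main_induction k hk ω hne hinj, SkC, div_eq_mul_inv]
  ring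
end
end
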